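/- Central limit theorem for ⊞^t: let t ∈ ℝ \ ℤ_{≥0} and let A ∈ U = 1 + zℝ⟦z⟧ satisfy κ_1^t(A) = 0 and κ_2^t(A) = 1. Then D_{1/√m}[A^{⊞^t m}] → H^{(t)} as m → ∞, in the sense that for every n ≥ 0 the n-th coefficient of D_{1/√m}[A^{⊞^t m}] converges to the n-th coefficient of H^{(t)}. -/

import Mathlib

open PowerSeries Finset

/-- Falling factorial `(t)_k = t (t-1) ⋯ (t-k+1)`. -/
noncomputable def ffall (t : ℝ) (k : ℕ) : ℝ := ∏ i ∈ Finset.range k, (t - i)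

/-- The `t`-deformed convolution of formal power series. -/
noncomputable def tconv (t : ℝ) (A B : PowerSeries ℝ) : PowerSeries ℝ :=
  PowerSeries.mk fun k => ∑ p ∈ Finset.HasAntidiagonal.antidiagonal k,
    ffall t k / (ffall t p.1 * ffall t p.2)
      * (PowerSeries.coeff (R := ℝ) p.1 A) * (PowerSeries.coeff (R := ℝ) p.2 B)

/-- Formal logarithm of a power series (with constant term 1):
`log A = - Σ_{k ≥ 1} (1 - A)^k / k`. -/
noncomputable def flog (A : PowerSeries ℝ) : PowerSeries ℝ :=
  PowerSeries.mk fun n =>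
    -∑ k ∈ Finset.range (n + 1), (PowerSeries.coeff (R := ℝ) n ((1 - A) ^ k)) / k

/-- Power sums of `A ∈ 1 + zℝ⟦z⟧`, defined by `Σ p_k(A) z^k = -z (d/dz) log A(z)`. -/
noncomputable def powSum (A : PowerSeries ℝ) (k : ℕ) : ℝ :=
  -(k : ℝ) * PowerSeries.coeff (R := ℝ) k (flog A)

/-- `E^t[A](z) = Σ_k (t^k/(t)_k) a_k z^k`. -/
noncomputable def Et (t : ℝ) (A : PowerSeries ℝ) : PowerSeries ℝ :=
  PowerSeries.mk fun k => t ^ k / ffall t k * PowerSeries.coeff (R := ℝ) k A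

/-- The `t`-deformed cumulant transform `C^t[A](z) = -(z/t)(d/dz) log(E^t[A](z))`. -/
noncomputable def Ct (t : ℝ) (A : PowerSeries ℝ) : PowerSeries ℝ :=
  PowerSeries.mk fun n => -(1 / t) * ((n : ℝ) * PowerSeries.coeff (R := ℝ) n (flog (Et t A)))

/-- The `i`-th `t`-deformed cumulant of `A`. -/
noncomputable def kappa (t : ℝ) (A : PowerSeries ℝ) (i : ℕ) : ℝ :=
  PowerSeries.coeff (R := ℝ) i (Ct t A)

/-- The `m`-fold `⊞^t`-convolution power `A^{⊞^t m}`. -/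
noncomputable def convPow (t : ℝ) (A : PowerSeries ℝ) : ℕ → PowerSeries ℝ
  | 0 => 1
  | n + 1 => tconv t A (convPow t A n)

/-- The `t`-deformed Hermite series. -/
noncomputable def Ht (t : ℝ) : PowerSeries ℝ :=
  PowerSeries.mk fun n =>
    if Even n then
      (-1) ^ (n / 2) * ffall t n / (t ^ (n / 2) * (2 ^ (n / 2) * ((n / 2).factorial : ℝ)))
    else 0


/-!
`E^t` turns `⊞^t` into the ordinary product of power series, so `A^{⊞^t m}` has
`n`-th coefficient `(t)_n / t^n` times that of `(E^t[A])^m`. The cumulant conditions say exactly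
that `E^t[A] = 1 + C` with `C = -(t/2) z^2 + O(z^3)`. Expanding `(1 + C)^m` binomially, the
`n`-th coefficient of `C^k` vanishes for `n < 2k`, while `m^{-n/2} binom(m, k) → [n = 2k] / k!`;
so only `k = n/2` survives, leaving `(-t/2)^{n/2} / (n/2)!`, which is the Hermite coefficient.
-/

open Filter Topology

lemma ffall_ne_zero {t : ℝ} (ht : ∀ n : ℕ, t ≠ n) (k : ℕ) : ffall t k ≠ 0 :=
  prod_ne_zero_iff.2 fun i _ => sub_ne_zero.2 (ht i)

lemma coeff_Et (t : ℝ) (A : ℝ⟦X⟧) (k : ℕ) :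
    coeff k (Et t A) = t ^ k / ffall t k * coeff k A :=
  coeff_mk _ _

lemma constantCoeff_Et (t : ℝ) (A : ℝ⟦X⟧) : constantCoeff (Et t A) = constantCoeff A := by
  rw [← coeff_zero_eq_constantCoeff_apply, ← coeff_zero_eq_constantCoeff_apply, coeff_Et]
  simp [ffall]

lemma Et_one (t : ℝ) : Et t 1 = 1 := by
  ext k
  rcases eq_or_ne k 0 with rfl | hk
  · simp [coeff_Et, ffall]
  · simp [coeff_Et, coeff_one, hk]

lemma Et_tconv {t : ℝ} (ht : ∀ n : ℕ, t ≠ n) (A B : ℝ⟦X⟧) :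
    Et t (tconv t A B) = Et t A * Et t B := by
  ext k
  simp only [coeff_Et, coeff_mul, tconv, coeff_mk, mul_sum]
  refine sum_congr rfl fun p hp => ?_
  rw [HasAntidiagonal.mem_antidiagonal] at hp
  have := ffall_ne_zero ht k
  have := ffall_ne_zero ht p.1
  have := ffall_ne_zero ht p.2
  field_simp
  rw [← hp, pow_add]
  ring

lemma Et_convPow {t : ℝ} (ht : ∀ n : ℕ, t ≠ n) (A : ℝ⟦X⟧) (m : ℕ) :
    Et t (convPow t A m) = Et t A ^ m := by
  induction m with
  | zero => exact Et_one t
  | succ m ih => rw [convPow, Et_tconv ht, ih, pow_succ']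

lemma coeff_eq_mul_coeff_Et {t : ℝ} (ht : ∀ n : ℕ, t ≠ n) (A : ℝ⟦X⟧) (n : ℕ) :
    coeff n A = ffall t n / t ^ n * coeff n (Et t A) := by
  have : t ≠ 0 := by simpa using ht 0
  have := ffall_ne_zero ht n
  rw [coeff_Et]
  field_simp

lemma coeff_rescale_convPow {t : ℝ} (ht : ∀ n : ℕ, t ≠ n) (A : ℝ⟦X⟧) (r : ℝ) (m n : ℕ) :
    coeff n (rescale r (convPow t A m)) = ffall t n / t ^ n * coeff n (rescale r (Et t A ^ m)) := by
  rw [coeff_rescale, coeff_rescale, coeff_eq_mul_coeff_Et ht, Et_convPow ht]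
  ring

lemma coeff_one_flog (B : ℝ⟦X⟧) : coeff 1 (flog B) = coeff 1 B := by
  simp [flog, sum_range_succ]

lemma coeff_two_flog {B : ℝ⟦X⟧} (hB : constantCoeff B = 1) :
    coeff 2 (flog B) = coeff 2 B - coeff 1 B ^ 2 / 2 := by
  simp [flog, sum_range_succ, sq, coeff_mul, Nat.sum_antidiagonal_eq_sum_range_succ_mk,
    coeff_zero_eq_constantCoeff_apply, hB, neg_add_eq_sub]

lemma kappa_one (t : ℝ) (A : ℝ⟦X⟧) : kappa t A 1 = -coeff 1 (Et t A) / t := by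
  rw [kappa, Ct, coeff_mk, coeff_one_flog]
  ring

lemma kappa_two (t : ℝ) {A : ℝ⟦X⟧} (hA : constantCoeff A = 1) :
    kappa t A 2 = -(2 * coeff 2 (Et t A) - coeff 1 (Et t A) ^ 2) / t := by
  rw [kappa, Ct, coeff_mk, coeff_two_flog ((constantCoeff_Et t A).trans hA)]
  ring

section OrderTwo

variable {R : Type*} [CommSemiring R] {C : R⟦X⟧}

lemma coeff_pow_eq_zero_of_lt (hC : X ^ 2 ∣ C) {k n : ℕ} (h : n < 2 * k) :
    coeff n (C ^ k) = 0 := by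
  obtain ⟨D, rfl⟩ := hC
  rw [mul_pow, ← pow_mul, coeff_X_pow_mul', if_neg (not_le.2 h)]

lemma coeff_two_mul_pow (hC : X ^ 2 ∣ C) (k : ℕ) : coeff (2 * k) (C ^ k) = coeff 2 C ^ k := by
  obtain ⟨D, rfl⟩ := hC
  rw [mul_pow, ← pow_mul, coeff_X_pow_mul', if_pos le_rfl, Nat.sub_self,
    coeff_X_pow_mul', if_pos le_rfl, Nat.sub_self, coeff_zero_eq_constantCoeff_apply,
    coeff_zero_eq_constantCoeff_apply, map_pow]

lemma coeff_one_add_pow (f : R⟦X⟧) (m n : ℕ) :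
    coeff n ((1 + f) ^ m) = ∑ k ∈ range (m + 1), (m.choose k : R) * coeff n (f ^ k) := by
  rw [add_comm, add_pow, map_sum]
  refine sum_congr rfl fun k _ => ?_
  rw [one_pow, mul_one, ← map_natCast (PowerSeries.C (R := R)), coeff_mul_C, mul_comm]

end OrderTwo

lemma tendsto_one_div_sqrt_natCast : Tendsto (fun m : ℕ => 1 / √m) atTop (𝓝 0) := by
  have := tendsto_inv_atTop_zero.comp (Real.tendsto_sqrt_atTop.comp tendsto_natCast_atTop_atTop)
  simpa only [one_div, Function.comp_def] using this

lemma tendsto_one_div_sqrt_pow_mul_choose {k n : ℕ} (h : 2 * k ≤ n) :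
    Tendsto (fun m : ℕ => (1 / √m) ^ n * m.choose k) atTop
      (𝓝 (if 2 * k = n then 1 / (k.factorial : ℝ) else 0)) := by
  have hchoose : Tendsto (fun m : ℕ => (m.choose k : ℝ) * ((1 / √m) ^ 2) ^ k) atTop
      (𝓝 (1 / (k.factorial : ℝ))) := by
    have hlim : Tendsto (fun m : ℕ => (m : ℝ) * (1 / √m) ^ 2) atTop (𝓝 1) := by
      refine tendsto_const_nhds.congr' ?_
      filter_upwards [eventually_ge_atTop 1] with m hm
      have : (m : ℝ) ≠ 0 := by positivity
      rw [div_pow, Real.sq_sqrt m.cast_nonneg]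
      field_simp
    simpa only [one_pow] using ProbabilityTheory.tendsto_choose_mul_pow_atTop k hlim
  have hsplit : ∀ m : ℕ, (1 / √m) ^ n * (m.choose k : ℝ)
      = (1 / √m) ^ (n - 2 * k) * (m.choose k * ((1 / √m) ^ 2) ^ k) := by
    intro m
    conv_lhs => rw [← Nat.sub_add_cancel h, pow_add, pow_mul]
    ring
  simp_rw [hsplit]
  split_ifs with he
  · simpa [he] using hchoose
  · have hpow := tendsto_one_div_sqrt_natCast.pow (n - 2 * k)
    rw [zero_pow (by omega)] at hpow
    simpa using hpow.mul hchoose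

lemma sum_range_ite_two_mul_eq {M : Type*} [AddCommMonoid M] (f : ℕ → M) (n : ℕ) :
    ∑ k ∈ range (n + 1), (if 2 * k = n then f k else 0) = if Even n then f (n / 2) else 0 := by
  split_ifs with hn
  · obtain ⟨j, rfl⟩ := hn
    rw [show (j + j) / 2 = j by omega, sum_eq_single_of_mem j (mem_range.2 (by omega))]
    · rw [if_pos (two_mul j)]
    · exact fun k _ hk => if_neg (by omega)
  · exact sum_eq_zero fun k _ => if_neg fun h => hn ⟨k, by omega⟩

theorem tendsto_coeff_rescale_one_add_pow {C : ℝ⟦X⟧} (hC : X ^ 2 ∣ C) (n : ℕ) :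
    Tendsto (fun m : ℕ => coeff n (rescale (1 / √m) ((1 + C) ^ m))) atTop
      (𝓝 (if Even n then coeff 2 C ^ (n / 2) / (n / 2).factorial else 0)) := by
  have hcoeff : ∀ᶠ m : ℕ in atTop, coeff n (rescale (1 / √m) ((1 + C) ^ m))
      = ∑ k ∈ range (n + 1), (1 / √m) ^ n * m.choose k * coeff n (C ^ k) := by
    filter_upwards [eventually_ge_atTop n] with m hm
    rw [coeff_rescale, coeff_one_add_pow, mul_sum,
      ← sum_subset (range_subset_range.2 (Nat.succ_le_succ hm))]
    · exact sum_congr rfl fun _ _ => by ring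
    · intro k _ hk
      rw [mem_range] at hk
      rw [coeff_pow_eq_zero_of_lt hC (by omega), mul_zero, mul_zero]
  rw [← sum_range_ite_two_mul_eq (fun k => coeff 2 C ^ k / (k.factorial : ℝ)) n]
  refine (tendsto_finsetSum _ fun k _ => ?_).congr' (EventuallyEq.symm hcoeff)
  rcases lt_or_ge n (2 * k) with hlt | hle
  · simp [coeff_pow_eq_zero_of_lt hC hlt, hlt.ne']
  · convert (tendsto_one_div_sqrt_pow_mul_choose hle).mul_const (coeff n (C ^ k)) using 2
    split_ifs with he
    · rw [← he, coeff_two_mul_pow hC]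
      ring
    · simp

lemma coeff_Ht {t : ℝ} (ht : t ≠ 0) (n : ℕ) :
    coeff n (Ht t) = ffall t n / t ^ n *
      (if Even n then (-t / 2) ^ (n / 2) / (n / 2).factorial else 0) := by
  rw [Ht, coeff_mk]
  split_ifs with hn
  · obtain ⟨j, rfl⟩ := hn
    rw [show (j + j) / 2 = j by omega, div_pow, neg_pow t, pow_add]
    field_simp
  · simp

/-- Central limit theorem for `⊞^t`: if `A ∈ U` has `κ_1^t(A) = 0` and `κ_2^t(A) = 1`,
then `D_{1/√m}[A^{⊞^t m}] → H^{(t)}` coefficientwise as `m → ∞`. -/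
theorem clt_tconv (t : ℝ) (ht : ∀ n : ℕ, t ≠ (n : ℝ))
    (A : PowerSeries ℝ) (hA : PowerSeries.constantCoeff (R := ℝ) A = 1)
    (h₁ : kappa t A 1 = 0) (h₂ : kappa t A 2 = 1) (n : ℕ) :
    Filter.Tendsto
      (fun m : ℕ =>
        PowerSeries.coeff (R := ℝ) n
          (PowerSeries.rescale (1 / Real.sqrt (m : ℝ)) (convPow t A m)))
      Filter.atTop (nhds (PowerSeries.coeff (R := ℝ) n (Ht t))) := by
  have ht0 : t ≠ 0 := by simpa using ht 0
  have hb1 : coeff 1 (Et t A) = 0 := by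
    rw [kappa_one, div_eq_zero_iff, neg_eq_zero] at h₁
    exact h₁.resolve_right ht0
  have hb2 : coeff 2 (Et t A) = -t / 2 := by
    rw [kappa_two t hA, hb1, div_eq_one_iff_eq ht0] at h₂
    linarith
  obtain ⟨C, hE⟩ : ∃ C, Et t A = 1 + C := ⟨Et t A - 1, (add_sub_cancel _ _).symm⟩
  have hb0 := (constantCoeff_Et t A).trans hA
  rw [hE] at hb0 hb1 hb2
  have hC : X ^ 2 ∣ C := X_pow_dvd_iff.2 fun m hm => by
    interval_cases m
    · simpa [coeff_zero_eq_constantCoeff_apply] using hb0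
    · simpa using hb1
  have hC2 : coeff 2 C = -t / 2 := by simpa [coeff_one] using hb2
  rw [coeff_Ht ht0, ← hC2]
  simpa only [coeff_rescale_convPow ht, hE] using
    (tendsto_coeff_rescale_one_add_pow hC n).const_mul (ffall t n / t ^ n)
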